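/- arXiv:2002.06915 — 2 statements merged into one kernel-verified Lean document; each statement's English description precedes it below -/
import Mathlib

section
/- Let L ⊆ X be a closed subspace and let p be a local peak selection of E at v⁰ ∈ S_{L⊥} with respect to L which is continuous at v⁰ and satisfies inf_{u∈L} ‖p(v⁰) − u‖ ≥ α for some constant α > 0. Set w⁰ = p(v⁰), let d⁰ ∈ X be the Riesz representative of −E'(w⁰), i.e. (d⁰, v) = −⟨E'(w⁰), v⟩ for all v ∈ X, and for s > 0 set v(s) = (v⁰ + s d⁰)/‖v⁰ + s d⁰‖ ∈ S_{L⊥}. If w⁰ is not a critical point of E (i.e. E'(w⁰) ≠ 0), then for any δ > 0 with ‖E'(w⁰)‖_{X*} > δ there exists σ₀ > 0 such that E(p(v(s))) − E(w⁰) < −α δ ‖v(s) − v⁰‖ for all s ∈ (0, σ₀). -/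
/-!
Write `w⁰ = u₀ + t₀ v⁰` with `u₀ ∈ L`; then `t₀ = ⟪w⁰, v⁰⟫ ≥ α > 0`. As `w⁰` maximises `E` locally
on the convex set `L_{v⁰}`, in which `±u` (`u ∈ L`) and `±v⁰` are feasible directions at `w⁰`,
`E'(w⁰)` vanishes on `L` and on `v⁰`, so `d⁰ ⊥ L, v⁰` and `v(s)` is a unit vector of `L⊥`.

Write `p(v(s)) = u + t v(s)` and `N = ‖v⁰ + s d⁰‖`. Tilting back,
`p(v(s)) − (t s / N) d⁰ = u + (t / N) v⁰` lies in `L_{v⁰}` and tends to `w⁰`, so its energy is at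
most `E(w⁰)`. Moving from it by `(t s / N) d⁰` lowers `E` at a rate close to `‖d⁰‖² > δ ‖d⁰‖`
(mean value theorem and continuity of `E'`), while `‖v(s) − v⁰‖ ≤ s ‖d⁰‖`; since `t / N → t₀ ≥ α`,
this gives the estimate.
-/

open scoped RealInnerProductSpace

/-- The closed half space `L_v = L + {t v : t ≥ 0}`. -/
def halfSpace {X : Type*} [NormedAddCommGroup X] [InnerProductSpace ℝ X]
    (L : Submodule ℝ X) (v : X) : Set X :=
  {w | ∃ u ∈ L, ∃ t : ℝ, 0 ≤ t ∧ w = u + t • v}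

/-- `w₀` is a local maximum of `E` in the half space `L_v`. -/
def IsLocalMaxIn {X : Type*} [NormedAddCommGroup X] [InnerProductSpace ℝ X]
    (E : X → ℝ) (L : Submodule ℝ X) (v w₀ : X) : Prop :=
  w₀ ∈ halfSpace L v ∧
    ∃ δ > (0 : ℝ), ∀ w ∈ halfSpace L v, ‖w - w₀‖ < δ → E w ≤ E w₀

open Filter Metric Set Topology

section HalfSpace

variable {X : Type*} [NormedAddCommGroup X] [InnerProductSpace ℝ X] {L : Submodule ℝ X}
  {v w u : X}

theorem convex_halfSpace (L : Submodule ℝ X) (v : X) : Convex ℝ (halfSpace L v) := by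
  rintro _ ⟨u₁, hu₁, t₁, ht₁, rfl⟩ _ ⟨u₂, hu₂, t₂, ht₂, rfl⟩ a b ha hb -
  refine ⟨a • u₁ + b • u₂, L.add_mem (L.smul_mem a hu₁) (L.smul_mem b hu₂), a * t₁ + b * t₂,
    by positivity, ?_⟩
  simp only [smul_add, add_smul, mul_smul]
  abel

theorem mem_halfSpace_of_mem (hu : u ∈ L) : u ∈ halfSpace L v :=
  ⟨u, hu, 0, le_rfl, by simp⟩

theorem add_mem_halfSpace (hw : w ∈ halfSpace L v) (hu : u ∈ L) : w + u ∈ halfSpace L v := by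
  obtain ⟨u', hu', t, ht, rfl⟩ := hw
  exact ⟨u' + u, L.add_mem hu' hu, t, ht, by abel⟩

theorem add_smul_mem_halfSpace (hw : w ∈ halfSpace L v) {c : ℝ} (hc : 0 ≤ c) :
    w + c • v ∈ halfSpace L v := by
  obtain ⟨u, hu, t, ht, rfl⟩ := hw
  exact ⟨u, hu, t + c, by positivity, by rw [add_smul, add_assoc]⟩

theorem sub_inner_smul_mem_and_inner_nonneg_of_mem_halfSpace (hv : v ∈ Lᗮ) (hv₁ : ‖v‖ = 1)
    (hw : w ∈ halfSpace L v) : w - ⟪w, v⟫ • v ∈ L ∧ 0 ≤ ⟪w, v⟫ := by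
  obtain ⟨u, hu, t, ht, rfl⟩ := hw
  have hinner : ⟪u + t • v, v⟫ = t := by
    rw [inner_add_left, Submodule.inner_right_of_mem_orthogonal hu hv, real_inner_smul_left,
      real_inner_self_eq_norm_sq, hv₁]
    ring
  rw [hinner, add_sub_cancel_right]
  exact ⟨hu, ht⟩

theorem sub_smul_mem_halfSpace_of_mem_halfSpace_smul {v' d : X} {c s : ℝ} (hc : 0 ≤ c)
    (hv'_eq : v' = c • (v + s • d)) (hv' : v' ∈ Lᗮ) (hv'₁ : ‖v'‖ = 1)
    (hw : w ∈ halfSpace L v') : w - (⟪w, v'⟫ * c * s) • d ∈ halfSpace L v := by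
  obtain ⟨hu, ht⟩ := sub_inner_smul_mem_and_inner_nonneg_of_mem_halfSpace hv' hv'₁ hw
  refine ⟨_, hu, ⟪w, v'⟫ * c, mul_nonneg ht hc, ?_⟩
  rw [hv'_eq]
  simp only [smul_add, mul_smul]
  abel

end HalfSpace

section FirstOrder

variable {X : Type*} [NormedAddCommGroup X] [InnerProductSpace ℝ X] {L : Submodule ℝ X}
  {E : X → ℝ} {φ : X →L[ℝ] ℝ} {v w₀ w u : X}

theorem IsLocalMaxIn.isLocalMaxOn (h : IsLocalMaxIn E L v w₀) :
    IsLocalMaxOn E (halfSpace L v) w₀ := by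
  obtain ⟨-, ρ, hρ, hmax⟩ := h
  filter_upwards [inter_mem_nhdsWithin _ (ball_mem_nhds w₀ hρ)] with w ⟨hw, hwρ⟩
  exact hmax w hw (mem_ball_iff_norm.1 hwρ)

theorem IsLocalMaxIn.hasFDerivAt_apply_sub_nonpos (h : IsLocalMaxIn E L v w₀)
    (hE : HasFDerivAt E φ w₀) (hw : w ∈ halfSpace L v) : φ (w - w₀) ≤ 0 :=
  h.isLocalMaxOn.hasFDerivWithinAt_nonpos hE.hasFDerivWithinAt <|
    sub_mem_posTangentConeAt_of_segment_subset <| (convex_halfSpace L v).segment_subset h.1 hw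

theorem IsLocalMaxIn.hasFDerivAt_apply_eq_zero_of_mem (h : IsLocalMaxIn E L v w₀)
    (hE : HasFDerivAt E φ w₀) (hu : u ∈ L) : φ u = 0 := by
  have h₁ := h.hasFDerivAt_apply_sub_nonpos hE (add_mem_halfSpace h.1 hu)
  have h₂ := h.hasFDerivAt_apply_sub_nonpos hE (add_mem_halfSpace h.1 (L.neg_mem hu))
  simp only [add_sub_cancel_left, map_neg] at h₁ h₂
  linarith

theorem IsLocalMaxIn.hasFDerivAt_apply_eq_zero_of_inner_pos (h : IsLocalMaxIn E L v w₀)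
    (hE : HasFDerivAt E φ w₀) (hv : v ∈ Lᗮ) (hv₁ : ‖v‖ = 1) (hpos : 0 < ⟪w₀, v⟫) :
    φ v = 0 := by
  have h₁ := h.hasFDerivAt_apply_sub_nonpos hE (add_smul_mem_halfSpace h.1 zero_le_one)
  have h₂ := h.hasFDerivAt_apply_sub_nonpos hE <| mem_halfSpace_of_mem
    (sub_inner_smul_mem_and_inner_nonneg_of_mem_halfSpace hv hv₁ h.1).1
  simp only [add_sub_cancel_left, one_smul, sub_sub_cancel_left, map_neg, map_smul,
    smul_eq_mul] at h₁ h₂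
  nlinarith

end FirstOrder

section Normalization

variable {X : Type*} [NormedAddCommGroup X] [InnerProductSpace ℝ X] {v y : X}

theorem one_le_norm_add_of_inner_eq_zero (hv : ‖v‖ = 1) (hvy : ⟪v, y⟫ = 0) : 1 ≤ ‖v + y‖ := by
  have := norm_add_sq_eq_norm_sq_add_norm_sq_real hvy
  rw [hv] at this
  nlinarith [norm_nonneg (v + y), mul_self_nonneg ‖y‖]

theorem norm_inv_norm_smul_add_eq_one (hv : ‖v‖ = 1) (hvy : ⟪v, y⟫ = 0) :
    ‖‖v + y‖⁻¹ • (v + y)‖ = 1 :=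
  norm_smul_inv_norm (norm_pos_iff.1 (one_pos.trans_le (one_le_norm_add_of_inner_eq_zero hv hvy)))

-- `2 sin (θ / 2) ≤ tan θ`, where `θ` is the angle between `v` and `v + y`.
theorem norm_inv_norm_smul_sub_le (hv : ‖v‖ = 1) (hvy : ⟪v, y⟫ = 0) :
    ‖‖v + y‖⁻¹ • (v + y) - v‖ ≤ ‖y‖ := by
  set N := ‖v + y‖ with hN_def
  have hN : 1 ≤ N := one_le_norm_add_of_inner_eq_zero hv hvy
  have hNy : N * N = 1 + ‖y‖ * ‖y‖ := by
    rw [hN_def, norm_add_sq_eq_norm_sq_add_norm_sq_real hvy, hv, one_mul]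
  have hsq : ‖N⁻¹ • (v + y) - v‖ ^ 2 * N = 2 * N - 2 := by
    rw [norm_sub_sq_real, norm_smul, real_inner_smul_left, inner_add_left, real_inner_comm v y,
      hvy, real_inner_self_eq_norm_sq, hv, ← hN_def, Real.norm_eq_abs, abs_inv,
      abs_of_pos (by linarith)]
    field_simp
    ring
  nlinarith [mul_nonneg (sq_nonneg (N - 1)) (by linarith : (0 : ℝ) ≤ N + 2), norm_nonneg y,
    norm_nonneg (N⁻¹ • (v + y) - v)]

end Normalization

theorem sub_lt_mul_of_forall_mem_ball_fderiv_apply_lt {X : Type*} [NormedAddCommGroup X]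
    [NormedSpace ℝ X] {E : X → ℝ} {E' : X → X →L[ℝ] ℝ} (hE : ∀ x, HasFDerivAt E (E' x) x)
    {x y d : X} {r τ B : ℝ} (hB : ∀ ξ ∈ ball y r, E' ξ d < B) (hτ : 0 < τ)
    (hx : ‖x - y‖ + τ * ‖d‖ < r) : E (x + τ • d) - E x < τ * B := by
  have hline : ∀ c : ℝ, HasDerivAt (fun c : ℝ => E (x + c • d)) (E' (x + c • d) d) c := fun c =>
    (hE _).comp_hasDerivAt c (by simpa using ((hasDerivAt_id c).smul_const d).const_add x)
  obtain ⟨c, hc, hslope⟩ := exists_hasDerivAt_eq_slope _ _ hτ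
    (continuous_iff_continuousAt.2 fun c => (hline c).continuousAt).continuousOn
    fun c _ => hline c
  have hcB : E' (x + c • d) d < B := hB _ <| mem_ball_iff_norm.2 <|
    calc ‖x + c • d - y‖ ≤ ‖x - y‖ + c * ‖d‖ := by
          rw [add_sub_right_comm]
          exact (norm_add_le _ _).trans_eq (by rw [norm_smul, Real.norm_of_nonneg hc.1.le])
      _ ≤ ‖x - y‖ + τ * ‖d‖ := by gcongr; exact hc.2.le
      _ < r := hx
  rw [hslope, zero_smul, add_zero, sub_zero, div_lt_iff₀ hτ] at hcB
  linarith

theorem eventually_descent {X : Type*} [NormedAddCommGroup X] [InnerProductSpace ℝ X]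
    {E : X → ℝ} {E' : X → X →L[ℝ] ℝ} (hE : ∀ x, HasFDerivAt E (E' x) x) {L : Submodule ℝ X}
    {v₀ d : X} {p : X → X} {vs : ℝ → X} {δp a b : ℝ}
    (hv₀ : v₀ ∈ Lᗮ) (hv₀₁ : ‖v₀‖ = 1) (hd : d ∈ Lᗮ) (hv₀d : ⟪v₀, d⟫ = 0)
    (hvs : ∀ s, vs s = ‖v₀ + s • d‖⁻¹ • (v₀ + s • d))
    (hδp : 0 < δp) (hp : ∀ v ∈ Lᗮ, ‖v‖ = 1 → ‖v - v₀‖ < δp → p v ∈ halfSpace L v)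
    (hpcont : ContinuousWithinAt p {v | v ∈ Lᗮ ∧ ‖v‖ = 1 ∧ ‖v - v₀‖ < δp} v₀)
    (hmax : IsLocalMaxOn E (halfSpace L v₀) (p v₀))
    (hslope : ∀ᶠ ξ in 𝓝 (p v₀), E' ξ d < -(b * ‖d‖))
    (hb : 0 ≤ b) (ht₀ : 0 < ⟪p v₀, v₀⟫) (hab : a < ⟪p v₀, v₀⟫ * b) :
    ∀ᶠ s in 𝓝[>] 0, (vs s ∈ Lᗮ ∧ ‖vs s‖ = 1 ∧ ‖vs s - v₀‖ < δp) ∧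
      E (p (vs s)) - E (p v₀) < -a * ‖vs s - v₀‖ := by
  obtain ⟨r, hr, hslope⟩ := Metric.eventually_nhds_iff_ball.1 hslope
  have hv₀sd : ∀ s : ℝ, ⟪v₀, s • d⟫ = 0 := fun s => by rw [real_inner_smul_right, hv₀d, mul_zero]
  have hvs_mem : ∀ s, vs s ∈ Lᗮ ∧ ‖vs s‖ = 1 := fun s => hvs s ▸
    ⟨Lᗮ.smul_mem _ (Lᗮ.add_mem hv₀ (Lᗮ.smul_mem _ hd)),
      norm_inv_norm_smul_add_eq_one hv₀₁ (hv₀sd s)⟩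
  have hline : Continuous fun s : ℝ => v₀ + s • d := by fun_prop
  have hN_lim : Tendsto (fun s : ℝ => ‖v₀ + s • d‖) (𝓝[>] 0) (𝓝 1) := by
    simpa [hv₀₁] using (hline.norm.tendsto 0).mono_left nhdsWithin_le_nhds
  have hvs_lim : Tendsto vs (𝓝[>] 0) (𝓝 v₀) := by
    simpa [← hvs] using
      (hN_lim.inv₀ one_ne_zero).smul ((hline.tendsto 0).mono_left nhdsWithin_le_nhds)
  have hnear : ∀ᶠ s in 𝓝[>] 0, ‖vs s - v₀‖ < δp := by
    simpa [dist_eq_norm] using hvs_lim.eventually (ball_mem_nhds v₀ hδp)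
  have hpvs_lim : Tendsto (fun s => p (vs s)) (𝓝[>] 0) (𝓝 (p v₀)) :=
    hpcont.tendsto.comp <| tendsto_nhdsWithin_iff.2
      ⟨hvs_lim, hnear.mono fun s hs => ⟨(hvs_mem s).1, (hvs_mem s).2, hs⟩⟩
  -- `c s = t / N` for `p (vs s) = u + t • vs s`, `N = ‖v₀ + s • d‖`, so `wb s = u + c s • v₀`.
  set c : ℝ → ℝ := fun s => ⟪p (vs s), vs s⟫ * ‖v₀ + s • d‖⁻¹
  have hc_lim : Tendsto c (𝓝[>] 0) (𝓝 ⟪p v₀, v₀⟫) := by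
    simpa using (hpvs_lim.inner hvs_lim).mul (hN_lim.inv₀ one_ne_zero)
  have hcs_lim : Tendsto (fun s => c s * s) (𝓝[>] 0) (𝓝 0) := by
    simpa using hc_lim.mul (tendsto_nhdsWithin_of_tendsto_nhds tendsto_id)
  set wb : ℝ → X := fun s => p (vs s) - (c s * s) • d with hwb
  have hwb_lim : Tendsto wb (𝓝[>] 0) (𝓝 (p v₀)) := by
    simpa using hpvs_lim.sub (hcs_lim.smul_const d)
  have hwb_mem : ∀ᶠ s in 𝓝[>] 0, wb s ∈ halfSpace L v₀ := hnear.mono fun s hs =>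
    sub_smul_mem_halfSpace_of_mem_halfSpace_smul (inv_nonneg.2 (norm_nonneg _)) (hvs s)
      (hvs_mem s).1 (hvs_mem s).2 (hp _ (hvs_mem s).1 (hvs_mem s).2 hs)
  have hE_le : ∀ᶠ s in 𝓝[>] 0, E (wb s) ≤ E (p v₀) :=
    (tendsto_nhdsWithin_iff.2 ⟨hwb_lim, hwb_mem⟩).eventually hmax
  have hsmall : ∀ᶠ s in 𝓝[>] 0, ‖wb s - p v₀‖ + c s * s * ‖d‖ < r := by
    refine Tendsto.eventually_lt_const hr ?_
    simpa using (hwb_lim.sub_const (p v₀)).norm.add (hcs_lim.mul_const ‖d‖)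
  filter_upwards [self_mem_nhdsWithin, hnear, hE_le, hsmall,
    hc_lim.eventually_const_lt ht₀, (hc_lim.mul_const b).eventually_const_lt hab]
    with s (hs : 0 < s) hsδ hEs hsr hcs hcb
  refine ⟨⟨(hvs_mem s).1, (hvs_mem s).2, hsδ⟩, ?_⟩
  have hdesc := sub_lt_mul_of_forall_mem_ball_fderiv_apply_lt hE hslope (mul_pos hcs hs) hsr
  rw [hwb, sub_add_cancel] at hdesc
  have hdist : ‖vs s - v₀‖ ≤ s * ‖d‖ := by
    simpa [hvs, norm_smul, abs_of_pos hs] using norm_inv_norm_smul_sub_le hv₀₁ (hv₀sd s)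
  calc E (p (vs s)) - E (p v₀) ≤ E (p (vs s)) - E (wb s) := by linarith
    _ < c s * s * -(b * ‖d‖) := hdesc
    _ = -(c s * b) * (s * ‖d‖) := by ring
    _ ≤ -(c s * b) * ‖vs s - v₀‖ := mul_le_mul_of_nonpos_left hdist (by nlinarith)
    _ ≤ -a * ‖vs s - v₀‖ := mul_le_mul_of_nonneg_right (by linarith) (norm_nonneg _)

theorem minimax_descent_property_general
    {X : Type*} [NormedAddCommGroup X] [InnerProductSpace ℝ X]
    (E : X → ℝ) (E' : X → X →L[ℝ] ℝ)
    (hE : ∀ x, HasFDerivAt E (E' x) x) (hE' : Continuous E')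
    (L : Submodule ℝ X)
    (v0 : X) (hv0mem : v0 ∈ Lᗮ) (hv0norm : ‖v0‖ = 1)
    (δp : ℝ) (hδp : 0 < δp)
    (p : X → X)
    (hp : ∀ v, v ∈ Lᗮ → ‖v‖ = 1 → ‖v - v0‖ < δp → IsLocalMaxIn E L v (p v))
    (hpcont : ContinuousWithinAt p {v : X | v ∈ Lᗮ ∧ ‖v‖ = 1 ∧ ‖v - v0‖ < δp} v0)
    (α : ℝ) (hα : 0 < α) (hdist : ∀ u ∈ L, α ≤ ‖p v0 - u‖)
    (d0 : X) (hd0 : ∀ v : X, ⟪d0, v⟫ = -(E' (p v0) v))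
    (vs : ℝ → X) (hvs : ∀ s : ℝ, vs s = ‖v0 + s • d0‖⁻¹ • (v0 + s • d0)) :
    ∀ δ : ℝ, 0 < δ → δ < ‖E' (p v0)‖ →
      ∃ σ₀ > (0 : ℝ), ∀ s : ℝ, 0 < s → s < σ₀ →
        (vs s ∈ Lᗮ ∧ ‖vs s‖ = 1 ∧ ‖vs s - v0‖ < δp) ∧
        E (p (vs s)) - E (p v0) < -(α * δ) * ‖vs s - v0‖ := by
  intro δ hδ hδn
  have hmax := hp v0 hv0mem hv0norm (by simpa using hδp)
  obtain ⟨hu₀, ht₀⟩ :=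
    sub_inner_smul_mem_and_inner_nonneg_of_mem_halfSpace hv0mem hv0norm hmax.1
  have hαt₀ : α ≤ ⟪p v0, v0⟫ := by
    simpa [norm_smul, hv0norm, abs_of_nonneg ht₀] using hdist _ hu₀
  have hd0L : d0 ∈ Lᗮ := (Submodule.mem_orthogonal' L d0).2 fun u hu => by
    rw [hd0, hmax.hasFDerivAt_apply_eq_zero_of_mem (hE _) hu, neg_zero]
  have hv0d0 : ⟪v0, d0⟫ = 0 := by
    rw [real_inner_comm, hd0, hmax.hasFDerivAt_apply_eq_zero_of_inner_pos (hE _) hv0mem hv0norm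
      (hα.trans_le hαt₀), neg_zero]
  have hgrad : E' (p v0) = -innerSL ℝ d0 := by
    ext v
    simp [hd0]
  obtain ⟨δ', hδδ', hδ'⟩ : ∃ δ', δ < δ' ∧ δ' < ‖d0‖ := by
    rw [hgrad, norm_neg, innerSL_apply_norm] at hδn
    exact exists_between hδn
  have hslope : ∀ᶠ ξ in 𝓝 (p v0), E' ξ d0 < -(δ' * ‖d0‖) := by
    refine ((ContinuousLinearMap.apply ℝ ℝ d0).continuous.comp hE').continuousAt.eventually_lt
      continuousAt_const ?_
    simp only [Function.comp_apply, ContinuousLinearMap.apply_apply, hgrad,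
      neg_apply, innerSL_apply_apply, real_inner_self_eq_norm_sq]
    nlinarith
  have hev := eventually_descent hE hv0mem hv0norm hd0L hv0d0 hvs hδp
    (fun v h₁ h₂ h₃ => (hp v h₁ h₂ h₃).1) hpcont hmax.isLocalMaxOn hslope
    (hδ.trans hδδ').le (hα.trans_le hαt₀) (by nlinarith : α * δ < ⟪p v0, v0⟫ * δ')
  obtain ⟨σ₀, hσ₀, hsub⟩ := mem_nhdsGT_iff_exists_Ioo_subset.1 hev
  exact ⟨σ₀, hσ₀, fun s hs₁ hs₂ => hsub ⟨hs₁, hs₂⟩⟩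

/-- **Descent property of the local minimax step** (Li–Zhou): if `w⁰ = p(v⁰)` is not a
critical point, then for any `0 < δ < ‖E'(w⁰)‖` there is `σ₀ > 0` with
`E(p(v(s))) − E(w⁰) < −α δ ‖v(s) − v⁰‖` for all `s ∈ (0, σ₀)`. -/
theorem minimax_descent_property
    {X : Type*} [NormedAddCommGroup X] [InnerProductSpace ℝ X] [CompleteSpace X]
    (E : X → ℝ) (E' : X → X →L[ℝ] ℝ)
    (hE : ∀ x, HasFDerivAt E (E' x) x) (hE' : Continuous E')
    (L : Submodule ℝ X) (hL : IsClosed (L : Set X))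
    (v0 : X) (hv0mem : v0 ∈ Lᗮ) (hv0norm : ‖v0‖ = 1)
    (δp : ℝ) (hδp : 0 < δp)
    (p : X → X)
    (hp : ∀ v, v ∈ Lᗮ → ‖v‖ = 1 → ‖v - v0‖ < δp → IsLocalMaxIn E L v (p v))
    (hpcont : ContinuousWithinAt p {v : X | v ∈ Lᗮ ∧ ‖v‖ = 1 ∧ ‖v - v0‖ < δp} v0)
    (α : ℝ) (hα : 0 < α) (hdist : ∀ u ∈ L, α ≤ ‖p v0 - u‖)
    (d0 : X) (hd0 : ∀ v : X, ⟪d0, v⟫ = -(E' (p v0) v))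
    (vs : ℝ → X) (hvs : ∀ s : ℝ, vs s = ‖v0 + s • d0‖⁻¹ • (v0 + s • d0))
    (hnotcrit : E' (p v0) ≠ 0) :
    ∀ δ : ℝ, 0 < δ → δ < ‖E' (p v0)‖ →
      ∃ σ₀ > (0 : ℝ), ∀ s : ℝ, 0 < s → s < σ₀ →
        (vs s ∈ Lᗮ ∧ ‖vs s‖ = 1 ∧ ‖vs s - v0‖ < δp) ∧
        E (p (vs s)) - E (p v0) < -(α * δ) * ‖vs s - v0‖ :=
  minimax_descent_property_general E E' hE hE' L v0 hv0mem hv0norm δp hδp p hp hpcont α hα hdist d0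
    hd0 vs hvs
end

section
/- Let L ⊆ X be a closed subspace, p a peak selection of E with respect to L, and suppose E satisfies the Palais–Smale condition. Fix λ > 0 and let {v^k} ⊂ S_{L⊥}, w^k = p(v^k) = u^k + t^k v^k (with u^k ∈ L, t^k ≥ 0) be generated by the local minimax iteration: d^k ∈ X is the Riesz representative of −E'(w^k), i.e. (d^k, v) = −⟨E'(w^k), v⟩ for all v ∈ X; v^k(s) = (v^k + s d^k)/‖v^k + s d^k‖ for s > 0; and v^{k+1} = v^k(s^k) with step size s^k = λ/2^{m_k}, where m_k ∈ ℤ is the minimal integer such that 2^{m_k} > ‖d^k‖ and E(p(v^k(λ/2^{m_k}))) − E(w^k) ≤ −(1/2) t^k ‖d^k‖ ‖v^k(λ/2^{m_k}) − v^k‖. Assume: (a) p is continuous; (b) inf_{u∈L} ‖w^k − u‖ ≥ α for all k = 0, 1, 2, …, for some constant α > 0; (c) inf_{v∈S_{L⊥}} E(p(v)) > −∞. Then {w^k} has a convergent subsequence, and any convergent subsequence of {w^k} converges to a critical point of E. -/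
open Filter
open scoped RealInnerProductSpace

/-!
Each iterate `w = p(v)` is a local maximum of `E` on `L_v`, so `E'(w)` vanishes on `L` and on
`v`: the gradient `d` is orthogonal to `L` and to `v`, and the step `v(s)` stays on the unit
sphere of `L⊥`. The step-size rule makes `E(w^k)` decrease by at least
`(α/2) ‖d^k‖ ‖v^{k+1} - v^k‖`, and since `E ∘ p` is bounded below these decrements are summable.
If the gradients stay away from `0`, then `(v^k)` is Cauchy and `w^k = p(v^k)` converges by
continuity of `p`; otherwise (PS) provides a convergent subsequence. At a limit `x = p(v̄)` with
`E'(x) ≠ 0`, the maximality of `x` on `L_v̄` and the first-order expansion of `E` along `d` show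
that a fixed dyadic step passes the test at all nearby iterates, so the steps `s^k` stay bounded
below along the subsequence, contradicting `s^k ‖d^k‖² → 0`.
-/

open Topology

theorem ContinuousOn.tendsto_comp_of_eventually_mem {α β ι : Type*} [TopologicalSpace α]
    [TopologicalSpace β] {p : α → β} {S : Set α} (hp : ContinuousOn p S) {a : α} (ha : a ∈ S)
    {l : Filter ι} {f : ι → α} (hf : Tendsto f l (𝓝 a)) (hfS : ∀ᶠ i in l, f i ∈ S) :
    Tendsto (fun i => p (f i)) l (𝓝 (p a)) :=
  (hp a ha).tendsto.comp (tendsto_nhdsWithin_iff.2 ⟨hf, hfS⟩)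

theorem summable_of_le_sub_succ {a f : ℕ → ℝ} {B : ℝ} (ha : ∀ k, 0 ≤ a k)
    (haf : ∀ k, a k ≤ f k - f (k + 1)) (hB : ∀ k, B ≤ f k) : Summable a :=
  summable_of_sum_range_le (c := f 0 - B) ha fun n => by
    have hsum := Finset.sum_le_sum fun i (_ : i ∈ Finset.range n) => haf i
    rw [Finset.sum_range_sub'] at hsum
    linarith [hB n]

theorem div_two_pow_le_of_minimal {lam : ℝ} (hlam : 0 < lam) {m : ℤ} {P : ℤ → Prop}
    (hmin : ∀ j < m, ¬P j) {j : ℕ} (hj : P j) : lam / 2 ^ j ≤ lam / (2 : ℝ) ^ m := by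
  rw [← zpow_natCast]
  exact div_le_div_of_nonneg_left hlam.le (by positivity)
    (zpow_le_zpow_right₀ one_le_two (not_lt.1 fun hlt => hmin j hlt hj))

section LocalMinimax

variable {X : Type*} [NormedAddCommGroup X] [InnerProductSpace ℝ X]

theorem eq_toDual_symm_neg_of_inner_eq_neg [CompleteSpace X] {F : StrongDual ℝ X} {d : X}
    (hd : ∀ x, ⟪d, x⟫ = -F x) : d = (InnerProductSpace.toDual ℝ X).symm (-F) := by
  rw [LinearIsometryEquiv.eq_symm_apply]
  ext x
  simp [hd]

theorem norm_eq_of_inner_eq_neg [CompleteSpace X] {F : StrongDual ℝ X} {d : X}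
    (hd : ∀ x, ⟪d, x⟫ = -F x) : ‖d‖ = ‖F‖ := by
  rw [eq_toDual_symm_neg_of_inner_eq_neg hd, LinearIsometryEquiv.norm_map, norm_neg]

section HalfSpace

variable {L : Submodule ℝ X} {v : X}

theorem inner_add_smul_self_of_mem_orthogonal {u : X} (hu : u ∈ L) (hv : v ∈ Lᗮ) (hv1 : ‖v‖ = 1)
    (t : ℝ) : ⟪u + t • v, v⟫ = t := by
  rw [inner_add_left, real_inner_smul_left, real_inner_self_eq_norm_sq, hv1,
    (Submodule.mem_orthogonal L v).1 hv u hu]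
  ring

theorem mem_halfSpace_iff (hv : v ∈ Lᗮ) (hv1 : ‖v‖ = 1) {w : X} :
    w ∈ halfSpace L v ↔ 0 ≤ ⟪w, v⟫ ∧ w - ⟪w, v⟫ • v ∈ L := by
  constructor
  · rintro ⟨u, hu, t, ht, rfl⟩
    rw [inner_add_smul_self_of_mem_orthogonal hu hv hv1]
    exact ⟨ht, by simpa using hu⟩
  · rintro ⟨ht, hu⟩
    exact ⟨_, hu, _, ht, by abel⟩

end HalfSpace

namespace IsLocalMaxIn

variable {E : X → ℝ} {E'w : StrongDual ℝ X} {L : Submodule ℝ X} {v w₀ : X}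

theorem hasFDerivAt_apply_eq_zero (hmax : IsLocalMaxIn E L v w₀) (hE : HasFDerivAt E E'w w₀) {y : X}
    (hy : ∀ᶠ τ in 𝓝 (0 : ℝ), w₀ + τ • y ∈ halfSpace L v) : E'w y = 0 := by
  obtain ⟨-, δ, hδ, hloc⟩ := hmax
  have hline : Tendsto (fun τ : ℝ => w₀ + τ • y) (𝓝 0) (𝓝 w₀) := by
    simpa using ((continuous_id.smul continuous_const).const_add w₀).tendsto (0 : ℝ)
  have hnear : ∀ᶠ τ in 𝓝 (0 : ℝ), ‖w₀ + τ • y - w₀‖ < δ := by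
    simpa only [dist_eq_norm] using hline.eventually (Metric.ball_mem_nhds w₀ hδ)
  have hlocmax : IsLocalMax (fun τ : ℝ => E (w₀ + τ • y)) 0 := by
    filter_upwards [hy, hnear] with τ hτL hτδ
    simpa using hloc _ hτL hτδ
  exact hlocmax.hasDerivAt_eq_zero (hE.hasLineDerivAt y)

theorem hasFDerivAt_apply_eq_zero_of_mem_s4 (hmax : IsLocalMaxIn E L v w₀) (hE : HasFDerivAt E E'w w₀)
    {y : X} (hy : y ∈ L) : E'w y = 0 :=
  hmax.hasFDerivAt_apply_eq_zero hE <| Eventually.of_forall fun τ => by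
    obtain ⟨u, hu, t, ht, rfl⟩ := hmax.1
    exact ⟨u + τ • y, L.add_mem hu (L.smul_mem τ hy), t, ht, by module⟩

theorem hasFDerivAt_apply_direction_eq_zero (hmax : IsLocalMaxIn E L v w₀)
    (hE : HasFDerivAt E E'w w₀) {u : X} {t : ℝ} (hu : u ∈ L) (ht : 0 < t)
    (hw₀ : w₀ = u + t • v) : E'w v = 0 :=
  hmax.hasFDerivAt_apply_eq_zero hE <| (eventually_gt_nhds (neg_neg_of_pos ht)).mono fun τ hτ =>
    ⟨u, hu, t + τ, by linarith, by rw [hw₀]; module⟩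

theorem mem_orthogonal_of_inner_eq_neg (hmax : IsLocalMaxIn E L v w₀) (hE : HasFDerivAt E E'w w₀)
    {d : X} (hd : ∀ x, ⟪d, x⟫ = -E'w x) : d ∈ Lᗮ :=
  (Submodule.mem_orthogonal' L d).2 fun y hy => by
    rw [hd, hmax.hasFDerivAt_apply_eq_zero_of_mem_s4 hE hy, neg_zero]

theorem inner_eq_zero_of_inner_eq_neg (hmax : IsLocalMaxIn E L v w₀)
    (hE : HasFDerivAt E E'w w₀) (hv : v ∈ Lᗮ) (hv1 : ‖v‖ = 1) (ht : 0 < ⟪w₀, v⟫)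
    {d : X} (hd : ∀ x, ⟪d, x⟫ = -E'w x) : ⟪v, d⟫ = 0 := by
  have hu := ((mem_halfSpace_iff hv hv1).1 hmax.1).2
  rw [real_inner_comm, hd, hmax.hasFDerivAt_apply_direction_eq_zero hE hu ht (by abel), neg_zero]

end IsLocalMaxIn

noncomputable def normalizedStep (v d : X) (s : ℝ) : X := ‖v + s • d‖⁻¹ • (v + s • d)

theorem tendsto_normalizedStep {ι : Type*} {l : Filter ι} {v d : ι → X} {s : ι → ℝ}
    {v₀ d₀ : X} {s₀ : ℝ} (hv : Tendsto v l (𝓝 v₀)) (hd : Tendsto d l (𝓝 d₀))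
    (hs : Tendsto s l (𝓝 s₀)) (h₀ : v₀ + s₀ • d₀ ≠ 0) :
    Tendsto (fun i => normalizedStep (v i) (d i) (s i)) l (𝓝 (normalizedStep v₀ d₀ s₀)) :=
  ((hv.add (hs.smul hd)).norm.inv₀ (norm_ne_zero_iff.2 h₀)).smul (hv.add (hs.smul hd))

section Orthogonal

variable {v d : X}

theorem norm_add_smul_sq_of_inner_eq_zero (hv : ‖v‖ = 1) (hvd : ⟪v, d⟫ = 0) (s : ℝ) :
    ‖v + s • d‖ ^ 2 = 1 + s ^ 2 * ‖d‖ ^ 2 := by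
  rw [norm_add_sq_real, real_inner_smul_right, hvd, norm_smul, hv, Real.norm_eq_abs, mul_pow,
    sq_abs]
  ring

theorem one_le_norm_add_smul_of_inner_eq_zero (hv : ‖v‖ = 1) (hvd : ⟪v, d⟫ = 0) (s : ℝ) :
    1 ≤ ‖v + s • d‖ := by
  have h := norm_add_smul_sq_of_inner_eq_zero hv hvd s
  nlinarith [norm_nonneg (v + s • d), sq_nonneg (s * ‖d‖)]

theorem add_smul_ne_zero_of_inner_eq_zero (hv : ‖v‖ = 1) (hvd : ⟪v, d⟫ = 0) (s : ℝ) :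
    v + s • d ≠ 0 :=
  norm_pos_iff.1 (one_pos.trans_le (one_le_norm_add_smul_of_inner_eq_zero hv hvd s))

theorem norm_normalizedStep (hv : ‖v‖ = 1) (hvd : ⟪v, d⟫ = 0) (s : ℝ) :
    ‖normalizedStep v d s‖ = 1 :=
  norm_smul_inv_norm (add_smul_ne_zero_of_inner_eq_zero hv hvd s)

theorem normalizedStep_mem {K : Submodule ℝ X} (hv : v ∈ K) (hd : d ∈ K) (s : ℝ) :
    normalizedStep v d s ∈ K :=
  K.smul_mem _ (K.add_mem hv (K.smul_mem s hd))

theorem inner_normalizedStep_self (hv : ‖v‖ = 1) (hvd : ⟪v, d⟫ = 0) (s : ℝ) :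
    ⟪normalizedStep v d s, v⟫ = ‖v + s • d‖⁻¹ := by
  rw [normalizedStep, real_inner_smul_left, inner_add_left, real_inner_smul_left,
    real_inner_self_eq_norm_sq, hv, real_inner_comm, hvd]
  ring

theorem norm_normalizedStep_sub_le (hv : ‖v‖ = 1) (hvd : ⟪v, d⟫ = 0) {s : ℝ} (hs : 0 ≤ s) :
    ‖normalizedStep v d s - v‖ ≤ s * ‖d‖ := by
  set N := ‖v + s • d‖
  have hN1 : 1 ≤ N := one_le_norm_add_smul_of_inner_eq_zero hv hvd s
  have hNsq : N ^ 2 = 1 + (s * ‖d‖) ^ 2 := by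
    rw [norm_add_smul_sq_of_inner_eq_zero hv hvd s]; ring
  -- `‖v(s) - v‖² = 2 - 2/N ≤ N² - 1 = (s‖d‖)²` because `N ≥ 1`
  have hsq : ‖normalizedStep v d s - v‖ ^ 2 = 2 - 2 * N⁻¹ := by
    rw [norm_sub_sq_real, norm_normalizedStep hv hvd, inner_normalizedStep_self hv hvd, hv]
    ring
  refine (pow_le_pow_iff_left₀ (norm_nonneg _) (by positivity) two_ne_zero).1 ?_
  have hNinv : N * N⁻¹ = 1 := mul_inv_cancel₀ (by positivity)
  rw [hsq]
  nlinarith [mul_nonneg (mul_nonneg (sq_nonneg (N - 1)) (by linarith : 0 ≤ N + 2))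
    (inv_nonneg.2 (by linarith : 0 ≤ N))]

theorem mul_norm_le_norm_mul_norm_normalizedStep_sub (hv : ‖v‖ = 1) (hvd : ⟪v, d⟫ = 0) (s : ℝ) :
    s * ‖d‖ ≤ ‖v + s • d‖ * ‖normalizedStep v d s - v‖ := by
  set N := ‖v + s • d‖
  have hN : 0 < N := one_pos.trans_le (one_le_norm_add_smul_of_inner_eq_zero hv hvd s)
  rcases eq_or_ne d 0 with rfl | hd
  · simpa using mul_nonneg hN.le (norm_nonneg _)
  have hinner : ⟪normalizedStep v d s - v, d⟫ = N⁻¹ * (s * ‖d‖ ^ 2) := by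
    rw [normalizedStep, inner_sub_left, real_inner_smul_left, inner_add_left,
      real_inner_smul_left, hvd, real_inner_self_eq_norm_sq]
    ring
  have hcs := hinner ▸ real_inner_le_norm (normalizedStep v d s - v) d
  have hd' : 0 < ‖d‖ := norm_pos_iff.2 hd
  have : s * ‖d‖ * ‖d‖ ≤ N * ‖normalizedStep v d s - v‖ * ‖d‖ := by
    calc s * ‖d‖ * ‖d‖ = N * (N⁻¹ * (s * ‖d‖ ^ 2)) := by field_simp
      _ ≤ N * (‖normalizedStep v d s - v‖ * ‖d‖) := by gcongr
      _ = N * ‖normalizedStep v d s - v‖ * ‖d‖ := by ring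
  exact le_of_mul_le_mul_right this hd'

end Orthogonal

theorem mem_halfSpace_of_mem_halfSpace_normalizedStep {L : Submodule ℝ X} {v d w : X}
    (hv : v ∈ Lᗮ) (hv1 : ‖v‖ = 1) (hd : d ∈ Lᗮ) (hvd : ⟪v, d⟫ = 0) {σ : ℝ}
    (hw : w ∈ halfSpace L (normalizedStep v d σ)) :
    w - (⟪w, normalizedStep v d σ⟫ * ‖v + σ • d‖⁻¹ * σ) • d ∈ halfSpace L v := by
  obtain ⟨ht, hu⟩ := (mem_halfSpace_iff (normalizedStep_mem hv hd σ)
    (norm_normalizedStep hv1 hvd σ)).1 hw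
  refine ⟨_, hu, ⟪w, normalizedStep v d σ⟫ * ‖v + σ • d‖⁻¹, by positivity, ?_⟩
  simp only [normalizedStep]
  module

theorem exists_tendsto_direction [CompleteSpace X] {L : Submodule ℝ X} {ι : Type*}
    {l : Filter ι} [l.NeBot] {u v w : ι → X} {t : ι → ℝ} {α : ℝ} {x : X} (hα : 0 < α)
    (hu : ∀ i, u i ∈ L) (hv : ∀ i, v i ∈ Lᗮ ∧ ‖v i‖ = 1) (ht : ∀ i, α ≤ t i)
    (hw : ∀ i, w i = u i + t i • v i) (hx : Tendsto w l (𝓝 x)) :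
    ∃ v₁, (v₁ ∈ Lᗮ ∧ ‖v₁‖ = 1) ∧ Tendsto v l (𝓝 v₁) ∧ Tendsto t l (𝓝 ⟪x, v₁⟫) := by
  set P := Lᗮ.starProjection
  have hP : ∀ i, P (w i) = t i • v i := fun i => by
    rw [hw i, map_add, (Submodule.starProjection_apply_eq_zero_iff _).2
      (L.le_orthogonal_orthogonal (hu i)),
      Submodule.starProjection_eq_self_iff.2 (Lᗮ.smul_mem _ (hv i).1), zero_add]
  have htv : Tendsto (fun i => t i • v i) l (𝓝 (P x)) :=
    ((P.continuous.tendsto x).comp hx).congr hP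
  have hnorm : Tendsto t l (𝓝 ‖P x‖) := by
    refine htv.norm.congr fun i => ?_
    rw [norm_smul, (hv i).2, mul_one, Real.norm_of_nonneg (hα.le.trans (ht i))]
  have hPx : P x ≠ 0 :=
    norm_pos_iff.1 (hα.trans_le (ge_of_tendsto hnorm (Eventually.of_forall ht)))
  have hvlim : Tendsto v l (𝓝 (‖P x‖⁻¹ • P x)) := by
    refine ((hnorm.inv₀ (norm_ne_zero_iff.2 hPx)).smul htv).congr fun i => ?_
    rw [inv_smul_smul₀ (hα.trans_le (ht i)).ne']
  refine ⟨_, ⟨Lᗮ.smul_mem _ (Submodule.starProjection_apply_mem _ x), norm_smul_inv_norm hPx⟩,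
    hvlim, (hx.inner hvlim).congr fun i => ?_⟩
  rw [hw i, inner_add_smul_self_of_mem_orthogonal (hu i) (hv i).1 (hv i).2]

theorem eventually_descent_normalizedStep {E : X → ℝ} {E' : X → StrongDual ℝ X}
    {L : Submodule ℝ X} {p : X → X} (hE : ∀ x, HasFDerivAt E (E' x) x) (hE' : Continuous E')
    (hp : ∀ v, v ∈ Lᗮ → ‖v‖ = 1 → IsLocalMaxIn E L v (p v))
    (hpcont : ContinuousOn p {x | x ∈ Lᗮ ∧ ‖x‖ = 1})
    {v₁ d : X} (hv₁ : v₁ ∈ Lᗮ) (hv₁1 : ‖v₁‖ = 1) (ht₁ : 0 < ⟪p v₁, v₁⟫)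
    (hd : ∀ y, ⟪d, y⟫ = -E' (p v₁) y) (hd0 : d ≠ 0) :
    ∀ᶠ σ in 𝓝[>] 0, E (p (normalizedStep v₁ d σ)) - E (p v₁) <
      -(1 / 2) * ⟪p v₁, v₁⟫ * ‖d‖ * ‖normalizedStep v₁ d σ - v₁‖ := by
  set x := p v₁
  set t₁ := ⟪x, v₁⟫
  have hmax := hp v₁ hv₁ hv₁1
  have hdL : d ∈ Lᗮ := hmax.mem_orthogonal_of_inner_eq_neg (hE x) hd
  have hvd : ⟪v₁, d⟫ = 0 := hmax.inner_eq_zero_of_inner_eq_neg (hE x) hv₁ hv₁1 ht₁ hd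
  have hEd : E' x d = -‖d‖ ^ 2 := by rw [← real_inner_self_eq_norm_sq, hd, neg_neg]
  set vσ : ℝ → X := normalizedStep v₁ d
  have hvσS : ∀ σ, vσ σ ∈ Lᗮ ∧ ‖vσ σ‖ = 1 := fun σ =>
    ⟨normalizedStep_mem hv₁ hdL σ, norm_normalizedStep hv₁1 hvd σ⟩
  have hvσ : Tendsto vσ (𝓝 0) (𝓝 v₁) := by
    have h0 : vσ 0 = v₁ := by simp [vσ, normalizedStep, hv₁1]
    exact h0 ▸ tendsto_normalizedStep tendsto_const_nhds tendsto_const_nhds tendsto_id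
      (add_smul_ne_zero_of_inner_eq_zero hv₁1 hvd 0)
  have hpσ : Tendsto (fun σ => p (vσ σ)) (𝓝 0) (𝓝 x) :=
    hpcont.tendsto_comp_of_eventually_mem ⟨hv₁, hv₁1⟩ hvσ (Eventually.of_forall hvσS)
  -- `p (vσ σ) = q σ + (a σ * σ) • d` with `q σ ∈ L_{v₁}`, `q σ → x` and `a σ → t₁`: maximality
  -- gives `E (q σ) ≤ E x`, and the first-order expansion of `E` at `x` along `d` the decrease
  set a : ℝ → ℝ := fun σ => ⟪p (vσ σ), vσ σ⟫ * ‖v₁ + σ • d‖⁻¹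
  set q : ℝ → X := fun σ => p (vσ σ) - (a σ * σ) • d
  have ha : Tendsto a (𝓝 0) (𝓝 t₁) := by
    have hN : Tendsto (fun σ : ℝ => ‖v₁ + σ • d‖) (𝓝 0) (𝓝 1) := by
      have hcont : Continuous fun σ : ℝ => ‖v₁ + σ • d‖ := by fun_prop
      simpa [hv₁1] using hcont.tendsto 0
    simpa using (hpσ.inner hvσ).mul (hN.inv₀ one_ne_zero)
  have hq : Tendsto q (𝓝 0) (𝓝 x) := by
    simpa using hpσ.sub ((ha.mul tendsto_id).smul_const d)
  have hqmem : ∀ σ, q σ ∈ halfSpace L v₁ := fun σ =>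
    mem_halfSpace_of_mem_halfSpace_normalizedStep hv₁ hv₁1 hdL hvd
      (hp _ (hvσS σ).1 (hvσS σ).2).1
  obtain ⟨-, δ, hδ, hloc⟩ := hmax
  have hEq : ∀ᶠ σ in 𝓝 0, E (q σ) ≤ E x :=
    (hq.eventually (Metric.ball_mem_nhds x hδ)).mono fun σ hσ =>
      hloc _ (hqmem σ) (by rwa [← dist_eq_norm])
  have hstrict : HasStrictFDerivAt E (E' x) x :=
    hasStrictFDerivAt_of_hasFDerivAt_of_continuousAt (Eventually.of_forall hE) hE'.continuousAt
  have hlin : ∀ᶠ σ in 𝓝 0, ‖E (p (vσ σ)) - E (q σ) - E' x (p (vσ σ) - q σ)‖ ≤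
      ‖d‖ / 4 * ‖p (vσ σ) - q σ‖ :=
    (hpσ.prodMk_nhds hq).eventually (hstrict.isLittleO.def (by positivity))
  have haσ : ∀ᶠ σ in 𝓝 0, 2 / 3 * t₁ < a σ := ha.eventually (lt_mem_nhds (by linarith))
  filter_upwards [nhdsWithin_le_nhds (hEq.and (hlin.and haσ)), self_mem_nhdsWithin]
    with σ ⟨hEqσ, hlinσ, haσ⟩ hσ
  have hpq : p (vσ σ) - q σ = (a σ * σ) • d := by simp [q]
  have hr : 0 < a σ * σ := mul_pos (by linarith) hσ
  have hd' : 0 < ‖d‖ := norm_pos_iff.2 hd0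
  rw [hpq, map_smul, hEd, smul_eq_mul, norm_smul, Real.norm_eq_abs, Real.norm_eq_abs,
    abs_of_pos hr] at hlinσ
  have hstep : t₁ * ‖d‖ * ‖vσ σ - v₁‖ ≤ t₁ * ‖d‖ * (σ * ‖d‖) :=
    mul_le_mul_of_nonneg_left (norm_normalizedStep_sub_le hv₁1 hvd hσ.le)
      (mul_nonneg ht₁.le (norm_nonneg d))
  calc E (p (vσ σ)) - E x ≤ -(3 / 4) * (a σ * σ) * ‖d‖ ^ 2 := by
        linarith [(abs_le.1 hlinσ).2]
    _ < -(1 / 2) * t₁ * (σ * ‖d‖) * ‖d‖ := by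
        nlinarith [mul_lt_mul_of_pos_right haσ (mul_pos hσ (pow_pos hd' 2))]
    _ ≤ -(1 / 2) * t₁ * ‖d‖ * ‖vσ σ - v₁‖ := by linarith

theorem eventually_armijo_of_tendsto {E : X → ℝ} (hE : Continuous E) {p : X → X} {S : Set X}
    (hpcont : ContinuousOn p S) {ι : Type*} {l : Filter ι} {v d : ι → X} {t : ι → ℝ}
    {v₁ d₁ : X} {t₁ σ : ℝ} (hvS : ∀ i, v i ∈ S) (hstepS : ∀ i, normalizedStep (v i) (d i) σ ∈ S)
    (hv₁S : v₁ ∈ S) (hstep₁S : normalizedStep v₁ d₁ σ ∈ S) (h₁ : v₁ + σ • d₁ ≠ 0)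
    (hv : Tendsto v l (𝓝 v₁)) (hd : Tendsto d l (𝓝 d₁)) (ht : Tendsto t l (𝓝 t₁))
    (hlim : E (p (normalizedStep v₁ d₁ σ)) - E (p v₁) <
      -(1 / 2) * t₁ * ‖d₁‖ * ‖normalizedStep v₁ d₁ σ - v₁‖) :
    ∀ᶠ i in l, E (p (normalizedStep (v i) (d i) σ)) - E (p (v i)) <
      -(1 / 2) * t i * ‖d i‖ * ‖normalizedStep (v i) (d i) σ - v i‖ := by
  have hstep := tendsto_normalizedStep hv hd tendsto_const_nhds h₁
  have hlhs := ((hE.tendsto _).comp (hpcont.tendsto_comp_of_eventually_mem hstep₁S hstep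
    (Eventually.of_forall hstepS))).sub
    ((hE.tendsto _).comp (hpcont.tendsto_comp_of_eventually_mem hv₁S hv (Eventually.of_forall hvS)))
  exact hlhs.eventually_lt (((ht.const_mul _).mul hd.norm).mul (hstep.sub hv).norm) hlim

theorem tendsto_step_mul_norm_sq_zero {v d : ℕ → X} {s : ℕ → ℝ} {lam : ℝ}
    (hv : ∀ k, ‖v k‖ = 1) (hvd : ∀ k, ⟪v k, d k⟫ = 0) (hs : ∀ k, 0 ≤ s k)
    (hsl : ∀ k, s k * ‖d k‖ ≤ lam) (hstep : ∀ k, v (k + 1) = normalizedStep (v k) (d k) (s k))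
    (hsum : Summable fun k => ‖d k‖ * ‖v (k + 1) - v k‖) :
    Tendsto (fun k => s k * ‖d k‖ ^ 2) atTop (𝓝 0) := by
  have hbound : ∀ k, s k * ‖d k‖ ^ 2 ≤ (1 + lam) * (‖d k‖ * ‖v (k + 1) - v k‖) := fun k => by
    have hN : ‖v k + s k • d k‖ ≤ 1 + lam := by
      calc ‖v k + s k • d k‖ ≤ ‖v k‖ + s k * ‖d k‖ := by
            simpa [norm_smul, abs_of_nonneg (hs k)] using norm_add_le (v k) (s k • d k)
        _ ≤ 1 + lam := by rw [hv k]; linarith [hsl k]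
    have h := mul_norm_le_norm_mul_norm_normalizedStep_sub (hv k) (hvd k) (s k)
    rw [← hstep k] at h
    nlinarith [norm_nonneg (d k), norm_nonneg (v (k + 1) - v k),
      mul_le_mul_of_nonneg_right hN (norm_nonneg (v (k + 1) - v k))]
  refine squeeze_zero (fun k => mul_nonneg (hs k) (sq_nonneg _)) hbound ?_
  simpa using hsum.tendsto_atTop_zero.const_mul (1 + lam)

theorem exists_tendsto_subseq_of_summable [CompleteSpace X] {E : X → ℝ}
    {E' : X → StrongDual ℝ X}
    (PS : ∀ u : ℕ → X, (∃ M : ℝ, ∀ k, |E (u k)| ≤ M) →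
      Tendsto (fun k => ‖E' (u k)‖) atTop (𝓝 0) →
      ∃ φ : ℕ → ℕ, StrictMono φ ∧ ∃ x : X, Tendsto (u ∘ φ) atTop (𝓝 x))
    {S : Set X} (hS : IsClosed S) {p : X → X} (hpcont : ContinuousOn p S) {v w : ℕ → X}
    (hv : ∀ k, v k ∈ S) (hw : ∀ k, w k = p (v k)) (hEw : Antitone fun k => E (w k)) {B : ℝ}
    (hB : ∀ k, B ≤ E (w k)) (hsum : Summable fun k => ‖E' (w k)‖ * ‖v (k + 1) - v k‖) :
    ∃ φ : ℕ → ℕ, StrictMono φ ∧ ∃ x : X, Tendsto (fun n => w (φ n)) atTop (𝓝 x) := by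
  by_cases hclust : MapClusterPt (0 : ℝ) atTop fun k => ‖E' (w k)‖
  · obtain ⟨ψ, hψ, hψ0⟩ := hclust.tendsto_subseq
    have hbdd : ∃ M : ℝ, ∀ n, |E (w (ψ n))| ≤ M :=
      ⟨_, fun n => abs_le_max_abs_abs (hB (ψ n)) (hEw (Nat.zero_le (ψ n)))⟩
    obtain ⟨φ, hφ, x, hx⟩ := PS _ hbdd hψ0
    exact ⟨ψ ∘ φ, hψ.comp hφ, x, hx⟩
  -- gradients bounded away from zero: the directions `v k` form a Cauchy sequence
  obtain ⟨ε, hε, hεk⟩ : ∃ ε > 0, ∀ᶠ k in atTop, ε ≤ ‖E' (w k)‖ := by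
    rw [mapClusterPt_iff_frequently] at hclust
    push Not at hclust
    obtain ⟨s, hs, hsk⟩ := hclust
    obtain ⟨ε, hε, hball⟩ := Metric.mem_nhds_iff.1 hs
    refine ⟨ε, hε, hsk.mono fun k hk => ?_⟩
    simpa using mt (@hball _) hk
  have hsumv : Summable fun k => ‖v (k + 1) - v k‖ :=
    .of_norm_bounded_eventually_nat (hsum.mul_left ε⁻¹) <| hεk.mono fun k hk => by
      rw [norm_norm, ← mul_assoc]
      exact le_mul_of_one_le_left (norm_nonneg _) ((one_le_inv_mul₀ hε).2 hk)
  have hdist : Summable fun k => dist (v k) (v (k + 1)) := by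
    simpa only [dist_eq_norm_sub'] using hsumv
  obtain ⟨v₁, hv₁⟩ := cauchySeq_tendsto_of_complete (cauchySeq_of_summable_dist hdist)
  have hpv := hpcont.tendsto_comp_of_eventually_mem
    (hS.mem_of_tendsto hv₁ (Eventually.of_forall hv)) hv₁ (Eventually.of_forall hv)
  exact ⟨id, strictMono_id, p v₁, by simpa only [id, hw] using hpv⟩

theorem hasFDerivAt_eq_zero_of_tendsto_subseq [CompleteSpace X] {E : X → ℝ}
    {E' : X → StrongDual ℝ X}
    (hE : ∀ x, HasFDerivAt E (E' x) x) (hE' : Continuous E') {L : Submodule ℝ X} {p : X → X}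
    (hp : ∀ v, v ∈ Lᗮ → ‖v‖ = 1 → IsLocalMaxIn E L v (p v))
    (hpcont : ContinuousOn p {x | x ∈ Lᗮ ∧ ‖x‖ = 1}) {lam : ℝ} (hlam : 0 < lam)
    {v w u d : ℕ → X} {t : ℕ → ℝ} {α : ℝ} (hα : 0 < α) (hv : ∀ k, v k ∈ Lᗮ ∧ ‖v k‖ = 1)
    (hw : ∀ k, w k = p (v k)) (hu : ∀ k, u k ∈ L) (htα : ∀ k, α ≤ t k)
    (hwut : ∀ k, w k = u k + t k • v k) (hd : ∀ k, ∀ x : X, ⟪d k, x⟫ = -(E' (w k) x))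
    (hdL : ∀ k, d k ∈ Lᗮ) (hvd : ∀ k, ⟪v k, d k⟫ = 0)
    {m : ℕ → ℤ} (hmmin : ∀ k, ∀ j : ℤ, j < m k →
      ¬(‖d k‖ < (2 : ℝ) ^ j ∧
        E (p (normalizedStep (v k) (d k) (lam / (2 : ℝ) ^ j))) - E (w k) ≤
          -(1 / 2) * t k * ‖d k‖ * ‖normalizedStep (v k) (d k) (lam / (2 : ℝ) ^ j) - v k‖))
    (hsd : Tendsto (fun k => lam / (2 : ℝ) ^ m k * ‖d k‖ ^ 2) atTop (𝓝 0))
    {φ : ℕ → ℕ} (hφ : StrictMono φ) {x : X} (hx : Tendsto (fun n => w (φ n)) atTop (𝓝 x)) :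
    E' x = 0 := by
  by_contra hne
  obtain ⟨v₁, ⟨hv₁, hv₁1⟩, hvφ, htφ⟩ := exists_tendsto_direction hα (fun n => hu (φ n))
    (fun n => hv (φ n)) (fun n => htα (φ n)) (fun n => hwut (φ n)) hx
  have hpv₁ : p v₁ = x := tendsto_nhds_unique (hpcont.tendsto_comp_of_eventually_mem ⟨hv₁, hv₁1⟩
    hvφ (Eventually.of_forall fun n => hv (φ n))) (by simpa only [hw] using hx)
  subst hpv₁
  have ht₁ : 0 < ⟪p v₁, v₁⟫ :=
    hα.trans_le (ge_of_tendsto htφ (Eventually.of_forall fun n => htα (φ n)))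
  set dd := (InnerProductSpace.toDual ℝ X).symm (-E' (p v₁))
  have hdd : ∀ y, ⟪dd, y⟫ = -E' (p v₁) y := fun y => by simp [dd]
  have hdd0 : dd ≠ 0 := by simpa [dd] using hne
  have hdφ : Tendsto (fun n => d (φ n)) atTop (𝓝 dd) :=
    (((InnerProductSpace.toDual ℝ X).symm.continuous.tendsto _).comp
      ((hE'.tendsto _).comp hx).neg).congr fun n =>
        (eq_toDual_symm_neg_of_inner_eq_neg (hd (φ n))).symm
  have hmax₁ := hp v₁ hv₁ hv₁1
  have hddL := hmax₁.mem_orthogonal_of_inner_eq_neg (hE _) hdd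
  have hvdd := hmax₁.inner_eq_zero_of_inner_eq_neg (hE _) hv₁ hv₁1 ht₁ hdd
  have hdyadic : Tendsto (fun j : ℕ => lam / (2 : ℝ) ^ j) atTop (𝓝[>] 0) :=
    tendsto_nhdsWithin_iff.2 ⟨tendsto_const_nhds.div_atTop
      (tendsto_pow_atTop_atTop_of_one_lt one_lt_two),
      Eventually.of_forall fun j => div_pos hlam (by positivity)⟩
  obtain ⟨j, hjdesc, hjd⟩ := ((hdyadic.eventually (eventually_descent_normalizedStep hE hE' hp
    hpcont hv₁ hv₁1 ht₁ hdd hdd0)).and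
    ((tendsto_pow_atTop_atTop_of_one_lt one_lt_two).eventually_gt_atTop ‖dd‖)).exists
  set σ := lam / (2 : ℝ) ^ j
  have hEc : Continuous E := continuous_iff_continuousAt.2 fun x => (hE x).continuousAt
  have harmijo := eventually_armijo_of_tendsto hEc hpcont (fun n => hv (φ n))
    (fun n => ⟨normalizedStep_mem (hv (φ n)).1 (hdL (φ n)) σ,
      norm_normalizedStep (hv (φ n)).2 (hvd (φ n)) σ⟩)
    ⟨hv₁, hv₁1⟩ ⟨normalizedStep_mem hv₁ hddL σ, norm_normalizedStep hv₁1 hvdd σ⟩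
    (add_smul_ne_zero_of_inner_eq_zero hv₁1 hvdd σ) hvφ hdφ htφ hjdesc
  -- the test passes at step `σ` along the subsequence, so the steps taken are at least `σ`
  have hsσ : ∀ᶠ n in atTop, σ * ‖d (φ n)‖ ^ 2 ≤ lam / (2 : ℝ) ^ m (φ n) * ‖d (φ n)‖ ^ 2 := by
    filter_upwards [harmijo, hdφ.norm.eventually (gt_mem_nhds hjd)] with n hn hnd
    refine mul_le_mul_of_nonneg_right (div_two_pow_le_of_minimal hlam (hmmin (φ n))
      ⟨by simpa using hnd, by simpa [hw] using hn.le⟩) (sq_nonneg _)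
  have hlim := le_of_tendsto_of_tendsto ((hdφ.norm.pow 2).const_mul σ)
    (hsd.comp hφ.tendsto_atTop) hsσ
  have : 0 < σ * ‖dd‖ ^ 2 := by positivity
  linarith

end LocalMinimax

theorem local_minimax_convergence_general
    {X : Type*} [NormedAddCommGroup X] [InnerProductSpace ℝ X] [CompleteSpace X]
    (E : X → ℝ) (E' : X → X →L[ℝ] ℝ)
    (hE : ∀ x, HasFDerivAt E (E' x) x) (hE' : Continuous E')
    (PS : ∀ u : ℕ → X, (∃ M : ℝ, ∀ k, |E (u k)| ≤ M) →
      Tendsto (fun k => ‖E' (u k)‖) atTop (nhds 0) →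
      ∃ φ : ℕ → ℕ, StrictMono φ ∧ ∃ x : X, Tendsto (u ∘ φ) atTop (nhds x))
    (L : Submodule ℝ X)
    (p : X → X)
    (hp : ∀ v, v ∈ Lᗮ → ‖v‖ = 1 → IsLocalMaxIn E L v (p v))
    (lam : ℝ) (hlam : 0 < lam)
    (v : ℕ → X) (hv : ∀ k, v k ∈ Lᗮ ∧ ‖v k‖ = 1)
    (w : ℕ → X) (hw : ∀ k, w k = p (v k))
    (u : ℕ → X) (t : ℕ → ℝ)
    (hu : ∀ k, u k ∈ L) (ht : ∀ k, 0 ≤ t k)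
    (hwut : ∀ k, w k = u k + t k • v k)
    (d : ℕ → X) (hd : ∀ k, ∀ x : X, ⟪d k, x⟫ = -(E' (w k) x))
    (vs : ℕ → ℝ → X)
    (hvs : ∀ k, ∀ s : ℝ, vs k s = ‖v k + s • d k‖⁻¹ • (v k + s • d k))
    (m : ℕ → ℤ)
    (hm : ∀ k, ‖d k‖ < (2 : ℝ) ^ m k ∧
      E (p (vs k (lam / (2 : ℝ) ^ m k))) - E (w k) ≤
        -(1 / 2) * t k * ‖d k‖ * ‖vs k (lam / (2 : ℝ) ^ m k) - v k‖)
    (hmmin : ∀ k, ∀ j : ℤ, j < m k →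
      ¬(‖d k‖ < (2 : ℝ) ^ j ∧
        E (p (vs k (lam / (2 : ℝ) ^ j))) - E (w k) ≤
          -(1 / 2) * t k * ‖d k‖ * ‖vs k (lam / (2 : ℝ) ^ j) - v k‖))
    (s : ℕ → ℝ) (hs : ∀ k, s k = lam / (2 : ℝ) ^ m k)
    (hvrec : ∀ k, v (k + 1) = vs k (s k))
    (hpcont : ContinuousOn p {x : X | x ∈ Lᗮ ∧ ‖x‖ = 1})
    (α : ℝ) (hα : 0 < α)
    (hdist : ∀ k, ∀ y ∈ L, α ≤ ‖w k - y‖)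
    (hbddbelow : ∃ B : ℝ, ∀ x : X, x ∈ Lᗮ → ‖x‖ = 1 → B ≤ E (p x)) :
    (∃ φ : ℕ → ℕ, StrictMono φ ∧ ∃ x : X, Tendsto (fun n => w (φ n)) atTop (nhds x)) ∧
    ∀ φ : ℕ → ℕ, StrictMono φ → ∀ x : X,
      Tendsto (fun n => w (φ n)) atTop (nhds x) → E' x = 0 := by
  obtain ⟨B, hB⟩ := hbddbelow
  obtain rfl : vs = fun k => normalizedStep (v k) (d k) := funext fun k => funext (hvs k)
  obtain rfl : s = fun k => lam / 2 ^ m k := funext hs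
  beta_reduce at hm hvrec
  have htα : ∀ k, α ≤ t k := fun k => by
    simpa [hwut k, norm_smul, (hv k).2, abs_of_nonneg (ht k)] using hdist k (u k) (hu k)
  have hmax : ∀ k, IsLocalMaxIn E L (v k) (w k) := fun k => hw k ▸ hp _ (hv k).1 (hv k).2
  have htw : ∀ k, 0 < ⟪w k, v k⟫ := fun k => by
    rw [hwut k, inner_add_smul_self_of_mem_orthogonal (hu k) (hv k).1 (hv k).2]
    linarith [htα k]
  have hdL : ∀ k, d k ∈ Lᗮ := fun k => (hmax k).mem_orthogonal_of_inner_eq_neg (hE _) (hd k)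
  have hvd : ∀ k, ⟪v k, d k⟫ = 0 := fun k =>
    (hmax k).inner_eq_zero_of_inner_eq_neg (hE _) (hv k).1 (hv k).2 (htw k) (hd k)
  have hdec : ∀ k, α / 2 * (‖d k‖ * ‖v (k + 1) - v k‖) ≤ E (w k) - E (w (k + 1)) := fun k => by
    have h := (hm k).2
    rw [← hvrec k, ← hw] at h
    nlinarith [mul_le_mul_of_nonneg_right (htα k)
      (mul_nonneg (norm_nonneg (d k)) (norm_nonneg (v (k + 1) - v k)))]
  have hEB : ∀ k, B ≤ E (w k) := fun k => hw k ▸ hB _ (hv k).1 (hv k).2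
  have hsum : Summable fun k => ‖d k‖ * ‖v (k + 1) - v k‖ :=
    (summable_mul_left_iff (by positivity)).1
      (summable_of_le_sub_succ (fun k => by positivity) hdec hEB)
  have hsd := tendsto_step_mul_norm_sq_zero (fun k => (hv k).2) hvd (fun k => by positivity)
    (fun k => by
      rw [div_mul_eq_mul_div, div_le_iff₀ (by positivity)]
      exact mul_le_mul_of_nonneg_left (hm k).1.le hlam.le) hvrec hsum
  refine ⟨?_, fun φ hφ x hx => hasFDerivAt_eq_zero_of_tendsto_subseq hE hE' hp hpcont hlam hα
    hv hw hu htα hwut hd hdL hvd hmmin hsd hφ hx⟩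
  exact exists_tendsto_subseq_of_summable PS
    ((Submodule.isClosed_orthogonal L).inter (isClosed_eq continuous_norm continuous_const))
    hpcont hv hw (antitone_nat_of_succ_le fun k =>
      sub_nonneg.1 (le_trans (by positivity) (hdec k)))
    hEB (by simpa only [norm_eq_of_inner_eq_neg (hd _)] using hsum)

/-- **Convergence of the local minimax iteration** (Li–Zhou, Theorems 3.1 and 3.2):
the sequence `w^k = p(v^k)` generated by the local minimax scheme with the dyadic step-size
rule has a convergent subsequence, and every convergent subsequence tends to a critical
point of `E`. -/
theorem local_minimax_convergence
    {X : Type*} [NormedAddCommGroup X] [InnerProductSpace ℝ X] [CompleteSpace X]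
    (E : X → ℝ) (E' : X → X →L[ℝ] ℝ)
    (hE : ∀ x, HasFDerivAt E (E' x) x) (hE' : Continuous E')
    (PS : ∀ u : ℕ → X, (∃ M : ℝ, ∀ k, |E (u k)| ≤ M) →
      Tendsto (fun k => ‖E' (u k)‖) atTop (nhds 0) →
      ∃ φ : ℕ → ℕ, StrictMono φ ∧ ∃ x : X, Tendsto (u ∘ φ) atTop (nhds x))
    (L : Submodule ℝ X) (hL : IsClosed (L : Set X))
    (p : X → X)
    (hp : ∀ v, v ∈ Lᗮ → ‖v‖ = 1 → IsLocalMaxIn E L v (p v))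
    (lam : ℝ) (hlam : 0 < lam)
    (v : ℕ → X) (hv : ∀ k, v k ∈ Lᗮ ∧ ‖v k‖ = 1)
    (w : ℕ → X) (hw : ∀ k, w k = p (v k))
    (u : ℕ → X) (t : ℕ → ℝ)
    (hu : ∀ k, u k ∈ L) (ht : ∀ k, 0 ≤ t k)
    (hwut : ∀ k, w k = u k + t k • v k)
    (d : ℕ → X) (hd : ∀ k, ∀ x : X, ⟪d k, x⟫ = -(E' (w k) x))
    (vs : ℕ → ℝ → X)
    (hvs : ∀ k, ∀ s : ℝ, vs k s = ‖v k + s • d k‖⁻¹ • (v k + s • d k))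
    (m : ℕ → ℤ)
    (hm : ∀ k, ‖d k‖ < (2 : ℝ) ^ m k ∧
      E (p (vs k (lam / (2 : ℝ) ^ m k))) - E (w k) ≤
        -(1 / 2) * t k * ‖d k‖ * ‖vs k (lam / (2 : ℝ) ^ m k) - v k‖)
    (hmmin : ∀ k, ∀ j : ℤ, j < m k →
      ¬(‖d k‖ < (2 : ℝ) ^ j ∧
        E (p (vs k (lam / (2 : ℝ) ^ j))) - E (w k) ≤
          -(1 / 2) * t k * ‖d k‖ * ‖vs k (lam / (2 : ℝ) ^ j) - v k‖))
    (s : ℕ → ℝ) (hs : ∀ k, s k = lam / (2 : ℝ) ^ m k)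
    (hvrec : ∀ k, v (k + 1) = vs k (s k))
    (hpcont : ContinuousOn p {x : X | x ∈ Lᗮ ∧ ‖x‖ = 1})
    (α : ℝ) (hα : 0 < α)
    (hdist : ∀ k, ∀ y ∈ L, α ≤ ‖w k - y‖)
    (hbddbelow : ∃ B : ℝ, ∀ x : X, x ∈ Lᗮ → ‖x‖ = 1 → B ≤ E (p x)) :
    (∃ φ : ℕ → ℕ, StrictMono φ ∧ ∃ x : X, Tendsto (fun n => w (φ n)) atTop (nhds x)) ∧
    ∀ φ : ℕ → ℕ, StrictMono φ → ∀ x : X,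
      Tendsto (fun n => w (φ n)) atTop (nhds x) → E' x = 0 :=
  local_minimax_convergence_general E E' hE hE' PS L p hp lam hlam v hv w hw u t hu ht hwut d hd vs
    hvs m hm hmmin s hs hvrec hpcont α hα hdist hbddbelow
end
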